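/- Let V be a finite-dimensional vector space over a finite field F, let X = (X_i : i ∈ I) be a finite family of subspaces of V, and let M be the q-matroid whose independent subspaces are the partial q-transversals of X. Then X is a minimal presentation of M (meaning: for every family Y = (Y_i : i ∈ I) with Y_i ≤ X_i for all i, if the partial q-transversals of Y coincide with those of X then Y_i = X_i for all i) if and only if each X_i is cyclic in M, i.e., X_i equals the supremum of all circuits C of M with C ≤ X_i. -/

import Mathlib

/-- `T` is a partial q-transversal of the family `X` of subspaces of `V`: every
(vector-space) basis `b 1, …, b m` of `T` admits an injection `σ` into the index set
with `b i ∉ X (σ i)` for all `i`. -/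
def IsPartialQTransversal {F V ι : Type*} [Field F] [AddCommGroup V] [Module F V]
    (X : ι → Submodule F V) (T : Submodule F V) : Prop :=
  ∀ (m : ℕ) (b : Fin m → V), LinearIndependent F b → Submodule.span F (Set.range b) = T →
    ∃ σ : Fin m → ι, Function.Injective σ ∧ ∀ i, b i ∉ X (σ i)

/-- A circuit of the q-matroid of partial q-transversals of `X`: a dependent subspace
(not a partial q-transversal) all of whose proper subspaces are independent. -/
def IsQTCircuit {F V ι : Type*} [Field F] [AddCommGroup V] [Module F V]
    (X : ι → Submodule F V) (C : Submodule F V) : Prop :=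
  ¬ IsPartialQTransversal X C ∧
    ∀ D : Submodule F V, D < C → IsPartialQTransversal X D

/-! By Hall's marriage theorem, `T` is a partial q-transversal of `X` iff `dim W ≤ ν_X(W)` for
every `W ≤ T`, where `ν_X(W) = numNotContaining X W` counts the `X j` not containing `W`.
Circuits are then tight: `dim C = ν_X(C) + 1`. Shrinking `X i` to the sum `Z` of the circuits
inside it leaves `ν` unchanged on circuits, and every dependent space contains a circuit, so the
q-matroid does not change and minimality forces `X i = Z`. Conversely, if `Y ≤ X` presents the
same q-matroid and a circuit `C ≤ X i` is not contained in `Y i`, then `ν_Y(C) > ν_X(C)` makes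
`C` independent for `Y`. -/

open Module Set Submodule Function

section QTransversal

variable {F V ι : Type*} [Field F] [AddCommGroup V] [Module F V]

noncomputable def numNotContaining (X : ι → Submodule F V) (W : Submodule F V) : ℕ :=
  {j | ¬ W ≤ X j}.ncard

theorem numNotContaining_mono [Finite ι] (X : ι → Submodule F V) {W W' : Submodule F V}
    (h : W ≤ W') : numNotContaining X W ≤ numNotContaining X W' :=
  ncard_le_ncard (fun _ hj hle => hj (h.trans hle)) (toFinite _)

theorem numNotContaining_le_of_family_le [Finite ι] {X Y : ι → Submodule F V} (hYX : ∀ j, Y j ≤ X j)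
    (W : Submodule F V) : numNotContaining X W ≤ numNotContaining Y W :=
  ncard_le_ncard (fun j hj hle => hj (hle.trans (hYX j))) (toFinite _)

theorem numNotContaining_lt_of_family_le [Finite ι] {X Y : ι → Submodule F V} (hYX : ∀ j, Y j ≤ X j)
    {W : Submodule F V} {i : ι} (hWX : W ≤ X i) (hWY : ¬ W ≤ Y i) :
    numNotContaining X W < numNotContaining Y W := by
  refine ncard_lt_ncard ((ssubset_iff_of_subset ?_).2 ⟨i, hWY, fun h => h hWX⟩) (toFinite _)
  exact fun j hj hle => hj (hle.trans (hYX j))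

variable {X Y : ι → Submodule F V} {T W C : Submodule F V}

theorem IsPartialQTransversal.of_family_le (hYX : ∀ j, Y j ≤ X j)
    (hT : IsPartialQTransversal X T) : IsPartialQTransversal Y T :=
  fun m b hb hspan => (hT m b hb hspan).imp fun _ hσ => hσ.imp_right fun h k hk => h k (hYX _ hk)

theorem IsPartialQTransversal.exists_injective (hT : IsPartialQTransversal X T) {κ : Type*}
    [Finite κ] {b : κ → V} (hb : LinearIndependent F b) (hspan : span F (range b) = T) :
    ∃ σ : κ → ι, Injective σ ∧ ∀ k, b k ∉ X (σ k) := by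
  obtain ⟨n, ⟨e⟩⟩ := Finite.exists_equiv_fin κ
  obtain ⟨σ, hσ, hbσ⟩ := hT n (b ∘ e.symm) (hb.comp _ e.symm.injective)
    (by rwa [range_comp, e.symm.range_eq_univ, image_univ])
  exact ⟨σ ∘ e, hσ.comp e.injective, fun k => by simpa using hbσ (e k)⟩

/-- A basis of `W` extends to a basis of `T`, whose transversal map sends the basis of `W`
injectively into the indices `j` with `W ≰ X j`. -/
theorem IsPartialQTransversal.finrank_le_numNotContaining [Finite ι] [FiniteDimensional F V]
    (hT : IsPartialQTransversal X T) (hWT : W ≤ T) :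
    finrank F W ≤ numNotContaining X W := by
  let b := Module.finBasis F W
  have hb : LinearIndepOn F id (range fun i => (b i : V)) :=
    (linearIndepOn_id_range_iff (Subtype.val_injective.comp b.injective)).2
      (b.linearIndependent.map' _ W.ker_subtype)
  obtain ⟨B, hBT, hbB, hTB, hB⟩ :=
    exists_linearIndepOn_id_extension hb (range_subset_iff.2 fun i => hWT (b i).2)
  have hspan : span F (range ((↑) : B → V)) = T := by
    rw [Subtype.range_coe]
    exact le_antisymm (span_le.2 hBT) hTB
  have : Finite B := hB.linearIndependent.finite
  obtain ⟨σ, hσ, hBσ⟩ := hT.exists_injective hB.linearIndependent hspan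
  let f : Fin (finrank F W) → {j | ¬ W ≤ X j} := fun i =>
    ⟨σ ⟨b i, hbB ⟨i, rfl⟩⟩, fun hle => hBσ _ (hle (b i).2)⟩
  have hf : Injective f := fun i i' h => by
    have hbV : (b i : V) = b i' := congrArg (Subtype.val : B → V) (hσ (Subtype.ext_iff.1 h))
    exact b.injective (Subtype.ext hbV)
  simpa [numNotContaining] using Nat.card_le_card_of_injective f hf

/-- Hall's marriage theorem, applied to the sets `{j | b k ∉ X j}` for a basis `b` of `T`. -/
theorem isPartialQTransversal_of_forall_finrank_le [Finite ι]
    (h : ∀ W ≤ T, finrank F W ≤ numNotContaining X W) : IsPartialQTransversal X T := by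
  classical
  have := Fintype.ofFinite ι
  intro m b hb hspan
  let t : Fin m → Finset ι := fun k => {j | b k ∉ X j}
  have hHall (s : Finset (Fin m)) : s.card ≤ (s.biUnion t).card := by
    have hWT : span F (b '' s) ≤ T := hspan ▸ span_mono (image_subset_range _ _)
    have hcoe : (↑(s.biUnion t) : Set ι) = {j | ¬ span F (b '' s) ≤ X j} := by
      ext j
      simp [t, span_le, subset_def]
    calc s.card = finrank F (span F (b '' s)) := by
          rw [image_eq_range, ← Fintype.card_coe s]
          exact (finrank_span_eq_card (hb.comp ((↑) : s → Fin m) Subtype.val_injective)).symm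
      _ ≤ numNotContaining X (span F (b '' s)) := h _ hWT
      _ = (s.biUnion t).card := by rw [numNotContaining, ← hcoe, ncard_coe_finset]
  obtain ⟨σ, hσ, hσt⟩ := (Finset.all_card_le_biUnion_card_iff_exists_injective t).1 hHall
  exact ⟨σ, hσ, fun k => by simpa [t] using hσt k⟩

theorem exists_isQTCircuit_le [FiniteDimensional F V] (hW : ¬ IsPartialQTransversal X W) :
    ∃ C ≤ W, IsQTCircuit X C := by
  obtain ⟨C, ⟨hCW, hC⟩, hmin⟩ :=
    wellFounded_lt.has_min {C | C ≤ W ∧ ¬ IsPartialQTransversal X C} ⟨W, le_rfl, hW⟩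
  exact ⟨C, hCW, hC, fun D hDC => by_contra fun hD => hmin D ⟨hDC.le.trans hCW, hD⟩ hDC⟩

theorem IsQTCircuit.numNotContaining_lt_finrank [Finite ι] [FiniteDimensional F V]
    (hC : IsQTCircuit X C) : numNotContaining X C < finrank F C := by
  by_contra! h
  refine hC.1 (isPartialQTransversal_of_forall_finrank_le fun W hWC => ?_)
  rcases hWC.lt_or_eq with hlt | rfl
  · exact (hC.2 W hlt).finrank_le_numNotContaining le_rfl
  · exact h

/-- Compare `C` with a hyperplane `W ⋖ C`, which is independent. -/
theorem IsQTCircuit.finrank_le_numNotContaining_add_one [Finite ι] [FiniteDimensional F V]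
    (hC : IsQTCircuit X C) : finrank F C ≤ numNotContaining X C + 1 := by
  have hCbot : C ≠ ⊥ := by
    rintro rfl
    simpa using hC.numNotContaining_lt_finrank
  obtain ⟨W, hWC⟩ := exists_covBy_of_wellFoundedGT (not_isMin_iff_ne_bot.2 hCbot)
  obtain ⟨x, hxC, hxW⟩ := SetLike.exists_of_lt hWC.lt
  have hsup : W ⊔ span F {x} = C :=
    (hWC.eq_or_eq le_sup_left (sup_le hWC.le ((span_singleton_le_iff_mem _ _).2 hxC))).resolve_left
      fun h => hxW (h ▸ mem_sup_right (mem_span_singleton_self x))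
  calc finrank F C = finrank F W + 1 := by rw [← hsup, finrank_sup_span_singleton hxW]
    _ ≤ numNotContaining X W + 1 := by
      gcongr
      exact (hC.2 W hWC.lt).finrank_le_numNotContaining le_rfl
    _ ≤ numNotContaining X C + 1 := by
      gcongr
      exact numNotContaining_mono X hWC.le

theorem isPartialQTransversal_iff_of_isQTCircuit_le [Finite ι] [FiniteDimensional F V]
    (hYX : ∀ j, Y j ≤ X j) (hcirc : ∀ C j, IsQTCircuit X C → C ≤ X j → C ≤ Y j)
    (T : Submodule F V) : IsPartialQTransversal Y T ↔ IsPartialQTransversal X T := by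
  refine ⟨fun hY => by_contra fun hX => ?_, IsPartialQTransversal.of_family_le hYX⟩
  obtain ⟨C, hCT, hC⟩ := exists_isQTCircuit_le hX
  have hcount : numNotContaining Y C = numNotContaining X C := by
    unfold numNotContaining
    congr 1
    ext j
    exact not_congr ⟨fun h => h.trans (hYX j), hcirc C j hC⟩
  have := hY.finrank_le_numNotContaining hCT
  have := hC.numNotContaining_lt_finrank
  omega

theorem IsQTCircuit.isPartialQTransversal_of_not_le [Finite ι] [FiniteDimensional F V]
    (hC : IsQTCircuit X C) (hYX : ∀ j, Y j ≤ X j) {i : ι} (hCX : C ≤ X i) (hCY : ¬ C ≤ Y i) :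
    IsPartialQTransversal Y C := by
  refine isPartialQTransversal_of_forall_finrank_le fun W hWC => ?_
  rcases hWC.lt_or_eq with hlt | rfl
  · exact ((hC.2 W hlt).finrank_le_numNotContaining le_rfl).trans
      (numNotContaining_le_of_family_le hYX W)
  · have := numNotContaining_lt_of_family_le hYX hCX hCY
    have := hC.finrank_le_numNotContaining_add_one
    omega

end QTransversal

theorem minimal_presentation_iff_cyclic_general {F V ι : Type*} [Field F]
    [AddCommGroup V] [Module F V] [FiniteDimensional F V] [Fintype ι]
    (X : ι → Submodule F V) :
    (∀ Y : ι → Submodule F V, (∀ i, Y i ≤ X i) →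
        (∀ T : Submodule F V, IsPartialQTransversal Y T ↔ IsPartialQTransversal X T) →
        ∀ i, Y i = X i) ↔
    (∀ i, X i = sSup {C : Submodule F V | IsQTCircuit X C ∧ C ≤ X i}) := by
  classical
  constructor
  · intro hmin i
    set Z := sSup {C : Submodule F V | IsQTCircuit X C ∧ C ≤ X i}
    have hYX (j : ι) : update X i Z j ≤ X j := by
      rcases eq_or_ne j i with rfl | hj
      · rw [update_self]
        exact sSup_le fun C hC => hC.2
      · rw [update_of_ne hj]
    have hcirc (C : Submodule F V) (j : ι) (hC : IsQTCircuit X C) (hCX : C ≤ X j) :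
        C ≤ update X i Z j := by
      rcases eq_or_ne j i with rfl | hj
      · rw [update_self]
        exact le_sSup ⟨hC, hCX⟩
      · rwa [update_of_ne hj]
    simpa using (hmin _ hYX (isPartialQTransversal_iff_of_isQTCircuit_le hYX hcirc) i).symm
  · intro hcyc Y hYX hsame i
    refine le_antisymm (hYX i) ?_
    calc X i = sSup {C : Submodule F V | IsQTCircuit X C ∧ C ≤ X i} := hcyc i
      _ ≤ Y i := sSup_le fun C ⟨hC, hCX⟩ => by_contra fun hCY =>
        hC.1 ((hsame C).1 (hC.isPartialQTransversal_of_not_le hYX hCX hCY))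

/-- A presentation `X = (X i : i ∈ ι)` of its q-matroid `M` of partial q-transversals is
minimal (no componentwise-smaller family has the same partial q-transversals) iff every
`X i` is cyclic in `M`, i.e. `X i` is the supremum of the circuits of `M` contained
in it. -/
theorem minimal_presentation_iff_cyclic {F V ι : Type*} [Field F] [Fintype F]
    [AddCommGroup V] [Module F V] [FiniteDimensional F V] [Fintype ι]
    (X : ι → Submodule F V) :
    (∀ Y : ι → Submodule F V, (∀ i, Y i ≤ X i) →
        (∀ T : Submodule F V, IsPartialQTransversal Y T ↔ IsPartialQTransversal X T) →
        ∀ i, Y i = X i) ↔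
    (∀ i, X i = sSup {C : Submodule F V | IsQTCircuit X C ∧ C ≤ X i}) :=
  minimal_presentation_iff_cyclic_general X
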